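/- Let T be an imprecise terrain and T' the terrain obtained from T by raising each lower bound low(v) to elev(M,v), where M is the realization computed by the sweep-plane minimum-removal algorithm (which, processing low- and high-events in increasing elevation order, finalizes pending components when they touch a finalized node or when a pending node reaches its upper bound). Then T' is a regular imprecise terrain. -/

import Mathlib

open scoped Classical
open Set

/-- An imprecise terrain: a finite geometric graph with nodes in the plane,
each node carrying an elevation interval `[low v, high v]`. -/
structure ImpTerrain (V : Type) [Fintype V] [DecidableEq V] where
  pos : V → ℝ × ℝ
  posInj : Function.Injective pos
  adj : V → V → Prop
  adj_symm : ∀ u v, adj u v → adj v u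
  adj_irrefl : ∀ v, ¬ adj v v
  low : V → ℝ
  high : V → ℝ

namespace ImpTerrain

variable {V : Type} [Fintype V] [DecidableEq V]

/-- A realization assigns to each node an elevation within its interval. -/
def IsRealization (T : ImpTerrain V) (R : V → ℝ) : Prop :=
  ∀ v, T.low v ≤ R v ∧ R v ≤ T.high v

/-- Horizontal (plane) distance between two nodes. -/
noncomputable def hdist (T : ImpTerrain V) (u v : V) : ℝ := dist (T.pos u) (T.pos v)

/-- Slope (steepness of descent) of the edge from `p` to `q` in realization `R`. -/
noncomputable def slope (T : ImpTerrain V) (R : V → ℝ) (p q : V) : ℝ :=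
  (R p - R q) / T.hdist p q

/-- `q` is a steepest-descent neighbor of `p` in `R`. -/
def SDN (T : ImpTerrain V) (R : V → ℝ) (p q : V) : Prop :=
  T.adj p q ∧ 0 ≤ T.slope R p q ∧ ∀ r, T.adj p r → T.slope R p r ≤ T.slope R p q

/-- The neighborhood of a set of nodes. -/
def Nbhd (T : ImpTerrain V) (P : Set V) : Set V :=
  {s | s ∉ P ∧ ∃ t ∈ P, T.adj s t}

/-- `u` and `v` are connected by a path staying inside `P`. -/
def ConnIn (T : ImpTerrain V) (P : Set V) (u v : V) : Prop :=
  Relation.ReflTransGen (fun a b => T.adj a b ∧ a ∈ P ∧ b ∈ P) u v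

/-- `P` is a local minimum in realization `R`: nonempty, connected, all nodes at
the same elevation, strictly below its neighborhood. -/
def LocalMin (T : ImpTerrain V) (R : V → ℝ) (P : Set V) : Prop :=
  P.Nonempty ∧ (∀ u ∈ P, ∀ v ∈ P, T.ConnIn P u v) ∧
    (∀ u ∈ P, ∀ v ∈ P, R u = R v) ∧ (∀ u ∈ P, ∀ t ∈ T.Nbhd P, R u < R t)

def InLocalMin (T : ImpTerrain V) (R : V → ℝ) (p : V) : Prop :=
  ∃ P, T.LocalMin R P ∧ p ∈ P

/-- One step of discrete water flow. -/
def FlowStep (T : ImpTerrain V) (R : V → ℝ) (p q : V) : Prop :=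
  (∃ P, T.LocalMin R P ∧ p ∈ P ∧ q ∈ P ∧ T.adj p q) ∨
    (¬ T.InLocalMin R p ∧ T.SDN R p q)

/-- `p ⇝_R q` : water from `p` reaches `q` in realization `R`. -/
def FlowsTo (T : ImpTerrain V) (R : V → ℝ) : V → V → Prop :=
  Relation.ReflTransGen (T.FlowStep R)

/-- The (discrete) watershed of a set of nodes `Q` in realization `R`. -/
def WS (T : ImpTerrain V) (R : V → ℝ) (Q : Set V) : Set V :=
  {p | ∃ q ∈ Q, T.FlowsTo R p q}

/-- The potential watershed of `Q`. -/
def PoWS (T : ImpTerrain V) (Q : Set V) : Set V :=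
  {p | ∃ R, T.IsRealization R ∧ p ∈ T.WS R Q}

/-- A flow path: a simple path following steepest-descent edges that ends in,
and visits all nodes of, a local minimum. -/
def IsFlowPath (T : ImpTerrain V) (R : V → ℝ) (L : List V) : Prop :=
  L.Nodup ∧ L.Chain' (fun p q => T.SDN R p q) ∧
    ∃ P, T.LocalMin R P ∧ (∀ v ∈ P, v ∈ L) ∧ ∃ hne : L ≠ [], L.getLast hne ∈ P

/-- The `Q`-avoiding potential watershed of `S`: nodes having, in some
realization, a flow path to a node of `S` whose portion up to that node
avoids `Q`. -/
def AvWS (T : ImpTerrain V) (Q S : Set V) : Set V :=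
  {p | ∃ R, T.IsRealization R ∧ ∃ L, T.IsFlowPath R L ∧ ∃ s ∈ S,
    ∃ i j : Fin L.length, (i : ℕ) ≤ (j : ℕ) ∧ L.get i = p ∧ L.get j = s ∧
      ∀ k : Fin L.length, (i : ℕ) ≤ (k : ℕ) → (k : ℕ) ≤ (j : ℕ) → L.get k ∉ Q}

/-- The persistent watershed of `Q`. -/
def PsWS (T : ImpTerrain V) (Q : Set V) : Set V :=
  (T.AvWS Q (T.PoWS Q)ᶜ)ᶜ

/-- The core watershed of `Q`: nodes from which every induced flow path leads
to a node of `Q`. -/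
def CoWS (T : ImpTerrain V) (Q : Set V) : Set V :=
  {p | ∀ R, T.IsRealization R → ∀ L, T.IsFlowPath R L →
    ∀ i : Fin L.length, L.get i = p →
      ∃ q ∈ Q, ∃ j : Fin L.length, (i : ℕ) ≤ (j : ℕ) ∧ L.get j = q}

/-- Union of all node sets disjoint from `Q` that form a local minimum in some
realization. -/
def Vmin (T : ImpTerrain V) (Q : Set V) : Set V :=
  ⋃₀ {r | r ∩ Q = ∅ ∧ ∃ R, T.IsRealization R ∧ T.LocalMin R r}

/-- `S` contains a local minimum in every realization. -/
def AlwaysMin (T : ImpTerrain V) (S : Set V) : Prop :=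
  ∀ R, T.IsRealization R → ∃ P, T.LocalMin R P ∧ P ⊆ S

/-- An imprecise minimum: a minimal set containing a local minimum in every
realization. -/
def ImpreciseMin (T : ImpTerrain V) (S : Set V) : Prop :=
  T.AlwaysMin S ∧ ∀ S', S' ⊂ S → ¬ T.AlwaysMin S'

/-- A terrain is regular if every local minimum of the lowermost realization is
an imprecise minimum. -/
def Regular (T : ImpTerrain V) : Prop :=
  ∀ P, T.LocalMin T.low P → T.ImpreciseMin P

/-- A proxy of `S`: a node of `S` from which water can never reach a node
outside `S` in any realization. -/
def IsProxy (T : ImpTerrain V) (S : Set V) (p : V) : Prop :=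
  p ∈ S ∧ ∀ R, T.IsRealization R → ∀ q, q ∉ S → ¬ T.FlowsTo R p q

/-- `R'` is an `ε`-perturbation of `R`. -/
def Perturb (ε : ℝ) (R R' : V → ℝ) : Prop := ∀ v, |R' v - R v| ≤ ε

/-- `S` together with all `ε`-perturbations of its members (`S^ε`). -/
def Enlarge (S : Set (V → ℝ)) (ε : ℝ) : Set (V → ℝ) :=
  S ∪ {R' | ∃ R ∈ S, Perturb ε R R'}

/-- `Π(S)` : flow paths induced by realizations in `S`. -/
def FlowPathsOf (T : ImpTerrain V) (S : Set (V → ℝ)) : Set (List V) :=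
  {L | ∃ R ∈ S, T.IsFlowPath R L}

/-- A flow path is stable with respect to `S`. -/
def StableWrt (T : ImpTerrain V) (S : Set (V → ℝ)) (L : List V) : Prop :=
  ∃ ε > (0 : ℝ), ∃ R ∈ S, ∀ R', Perturb ε R R' → T.IsFlowPath R' L

/-- State of the sweep-plane minimum-removal algorithm. -/
structure SweepState (V : Type) where
  discovered : Set V
  final : V → Option ℝ
  proxies : Set V

def pendingS (st : SweepState V) (v : V) : Prop :=
  v ∈ st.discovered ∧ st.final v = none

/-- Pending component of `v`. -/
def pendComp (T : ImpTerrain V) (st : SweepState V) (v : V) : Set V :=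
  {u | Relation.ReflTransGen (fun a b => T.adj a b ∧ pendingS st a ∧ pendingS st b) v u}

/-- One step of the sweep algorithm, processing a `low` event `(v, false)` or a
`high` event `(v, true)`. -/
noncomputable def sweepStep (T : ImpTerrain V) (st : SweepState V) : V × Bool → SweepState V
  | (v, false) =>
    let st1 : SweepState V := ⟨insert v st.discovered, st.final, st.proxies⟩
    if ∃ u, T.adj v u ∧ (st.final u).isSome = true then
      ⟨st1.discovered,
        fun w => if w ∈ T.pendComp st1 v then some (T.low v) else st.final w,
        st.proxies⟩
    else st1
  | (v, true) =>
    if (st.final v).isSome = true then st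
    else
      ⟨st.discovered,
        fun w =>
          if w ∈ T.pendComp st v then some (sSup (T.low '' T.pendComp st v))
          else st.final w,
        insert v st.proxies⟩

noncomputable def sweepRun (T : ImpTerrain V) (evs : List (V × Bool)) : SweepState V :=
  evs.foldl T.sweepStep ⟨∅, fun _ => none, ∅⟩

/-- Elevation key of an event. -/
def eKey (T : ImpTerrain V) : V × Bool → ℝ
  | (v, false) => T.low v
  | (v, true) => T.high v

/-- A valid event list: all events, each once, sorted by elevation with low
events before high events at equal elevation. -/
def ValidEventList (T : ImpTerrain V) (evs : List (V × Bool)) : Prop :=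
  (∀ v : V, ∀ b : Bool, (v, b) ∈ evs) ∧ evs.Nodup ∧
    evs.Pairwise (fun e1 e2 =>
      T.eKey e1 < T.eKey e2 ∨ (T.eKey e1 = T.eKey e2 ∧ ¬(e1.2 = true ∧ e2.2 = false)))

/-- The realization `M` computed by the sweep algorithm. -/
noncomputable def sweepM (T : ImpTerrain V) (evs : List (V × Bool)) : V → ℝ :=
  fun v => ((T.sweepRun evs).final v).getD (T.high v)

end ImpTerrain

/-! The sweep keeps every plateau of finalized nodes (a connected set finalized at one level `x`)
in one of two states: it *drains*, i.e. touches a node finalized strictly below `x`, or it is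
*guarded* by a node `w` whose high event has passed, with `x ≤ high w` and `high w < low t` for
every neighbour `t` finalized above `x`. A high event creates a plateau with no finalized
neighbours, guarded by the event's node; anything attached to it later is discovered after
`high w`, hence above it. A low event can extend a plateau only at level `low v`, and a guarded
plateau at that level is impossible since its guard lies below `low v`.

A local minimum `P` of the computed realization `M` cannot drain, so it has a guard `w` with
`high w < low t ≤ M t` for every neighbour `t` of `P`. In the raised terrain every realization
is then lowest somewhere in `P` at height at most `high w`, and the level component there is a
local minimum inside `P`; and `P` is minimal since a local minimum of `M` inside `P` is `P`. -/

section Piecewise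

variable {α β : Type*} {K : Set α} [∀ j, Decidable (j ∈ K)] {f : α → Option β} {c : β}

lemma Set.piecewise_some_eq_some_iff {u : α} {y : β} :
    K.piecewise (fun _ => some c) f u = some y ↔
      (u ∈ K ∧ c = y) ∨ (u ∉ K ∧ f u = some y) := by
  by_cases hu : u ∈ K <;> simp [hu]

lemma Set.piecewise_some_eq_none_iff {u : α} :
    K.piecewise (fun _ => some c) f u = none ↔ u ∉ K ∧ f u = none := by
  by_cases hu : u ∈ K <;> simp [hu]

lemma Set.piecewise_some_ne_none_iff {u : α} :
    K.piecewise (fun _ => some c) f u ≠ none ↔ u ∈ K ∨ f u ≠ none := by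
  by_cases hu : u ∈ K <;> simp [hu]

lemma Set.piecewise_some_eq_some_of_eq_some (hK : ∀ u ∈ K, f u = none) {u : α} {y : β}
    (hu : f u = some y) : K.piecewise (fun _ => some c) f u = some y :=
  Set.piecewise_some_eq_some_iff.2 (.inr ⟨fun huK => by simp [hK u huK] at hu, hu⟩)

end Piecewise

namespace ImpTerrain

variable {V : Type} [Fintype V] [DecidableEq V] {T : ImpTerrain V}

section LocalMin

variable {P Q S : Set V} {R : V → ℝ}

lemma ConnIn.symm {u v : V} (h : T.ConnIn P u v) : T.ConnIn P v u :=
  Relation.ReflTransGen.mono (fun _ _ hab => ⟨T.adj_symm _ _ hab.1, hab.2.2, hab.2.1⟩) _ _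
    (Relation.reflTransGen_swap.mpr h)

lemma ConnIn.mem {u v : V} (h : T.ConnIn P u v) (hu : u ∈ P) : v ∈ P := by
  induction h with
  | refl => exact hu
  | tail _ hst _ => exact hst.2.2

lemma ConnIn.connIn_setOf {u v : V} (h : T.ConnIn P u v) :
    T.ConnIn {w | T.ConnIn P u w} u v := by
  induction h with
  | refl => exact .refl
  | tail huw hst ih => exact ih.tail ⟨hst.1, huw, huw.tail hst⟩

lemma ConnIn.exists_adj_mem_notMem {u v : V} (h : T.ConnIn P u v) (hu : u ∈ Q) (hv : v ∉ Q) :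
    ∃ a ∈ Q, ∃ b ∈ P, b ∉ Q ∧ T.adj a b := by
  induction h with
  | refl => exact absurd hu hv
  | @tail b c _ hbc ih =>
    by_cases hb : b ∈ Q
    · exact ⟨b, hb, c, hbc.2.2, hv, hbc.1⟩
    · exact ih hb

lemma LocalMin.eq_of_subset (hP : T.LocalMin R P) (hQ : T.LocalMin R Q) (hQP : Q ⊆ P) :
    Q = P := by
  refine hQP.antisymm fun x hx => ?_
  by_contra hxQ
  obtain ⟨q, hq⟩ := hQ.1
  obtain ⟨a, ha, b, hb, hbQ, hab⟩ := (hP.2.1 q (hQP hq) x hx).exists_adj_mem_notMem hq hxQ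
  exact (hQ.2.2.2 a ha b ⟨hbQ, a, ha, T.adj_symm _ _ hab⟩).ne (hP.2.2.1 a (hQP ha) b hb)

lemma localMin_setOf_connIn {u₀ : V} (hu₀ : u₀ ∈ S) (hS : ∀ u ∈ S, R u = R u₀)
    (hout : ∀ s ∈ S, ∀ t ∉ S, T.adj s t → R u₀ < R t) :
    T.LocalMin R {u | T.ConnIn S u₀ u} := by
  refine ⟨⟨u₀, .refl⟩, fun u hu u' hu' => ?_, fun u hu u' hu' => ?_, fun u hu t ht => ?_⟩
  · exact Relation.ReflTransGen.trans (ConnIn.symm (ConnIn.connIn_setOf hu))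
      (ConnIn.connIn_setOf hu')
  · rw [hS u (ConnIn.mem hu hu₀), hS u' (ConnIn.mem hu' hu₀)]
  · obtain ⟨htQ, s, hs, hts⟩ := ht
    have hsS : s ∈ S := ConnIn.mem hs hu₀
    rw [hS u (ConnIn.mem hu hu₀)]
    refine hout s hsS t (fun htS => htQ ?_) (T.adj_symm _ _ hts)
    exact Relation.ReflTransGen.tail hs ⟨T.adj_symm _ _ hts, hsS, htS⟩

lemma alwaysMin_of_high_lt_low_nbhd {w : V} (hw : w ∈ P)
    (hguard : ∀ t ∈ T.Nbhd P, T.high w < T.low t) : T.AlwaysMin P := by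
  intro R hR
  obtain ⟨u₀, hu₀, hmin⟩ := Set.exists_min_image P R P.toFinite ⟨w, hw⟩
  let S := {u | u ∈ P ∧ R u = R u₀}
  have hout : ∀ s ∈ S, ∀ t ∉ S, T.adj s t → R u₀ < R t := by
    intro s hs t ht hst
    by_cases htP : t ∈ P
    · exact (hmin t htP).lt_of_ne fun h => ht ⟨htP, h.symm⟩
    · calc R u₀ ≤ R w := hmin w hw
        _ ≤ T.high w := (hR w).2
        _ < T.low t := hguard t ⟨htP, s, hs.1, T.adj_symm _ _ hst⟩
        _ ≤ R t := (hR t).1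
  exact ⟨_, localMin_setOf_connIn (S := S) ⟨hu₀, rfl⟩ (fun u hu => hu.2) hout,
    fun u hu => (ConnIn.mem hu ⟨hu₀, rfl⟩).1⟩

lemma impreciseMin_of_high_lt_low_nbhd (hle : ∀ v, T.low v ≤ T.high v)
    (hP : T.LocalMin T.low P) {w : V} (hw : w ∈ P)
    (hguard : ∀ t ∈ T.Nbhd P, T.high w < T.low t) : T.ImpreciseMin P := by
  refine ⟨alwaysMin_of_high_lt_low_nbhd hw hguard, fun S hSP hS => ?_⟩
  obtain ⟨Q, hQ, hQS⟩ := hS T.low fun v => ⟨le_rfl, hle v⟩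
  exact hSP.2 (hP.eq_of_subset hQ (hQS.trans hSP.1) ▸ hQS)

end LocalMin

section Plateau

def PlateauConn (T : ImpTerrain V) (f : V → Option ℝ) (x : ℝ) : V → V → Prop :=
  Relation.ReflTransGen fun a b => T.adj a b ∧ f a = some x ∧ f b = some x

def Drains (T : ImpTerrain V) (f : V → Option ℝ) (x : ℝ) (v : V) : Prop :=
  ∃ a t y, T.PlateauConn f x v a ∧ T.adj a t ∧ f t = some y ∧ y < x

/-- `w` plays the role of the proxy reported by the high event that finalized the plateau of
`v` at level `x`. -/
def GuardedBy (T : ImpTerrain V) (f : V → Option ℝ) (x : ℝ) (v w : V) : Prop :=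
  T.PlateauConn f x v w ∧ x ≤ T.high w ∧
    ∀ a t y, T.PlateauConn f x v a → T.adj a t → f t = some y → x < y → T.high w < T.low t

def DrainsOrGuarded (T : ImpTerrain V) (p : List (V × Bool)) (f : V → Option ℝ) : Prop :=
  ∀ v x, f v = some x → T.Drains f x v ∨ ∃ w, (w, true) ∈ p ∧ T.GuardedBy f x v w

variable {f g : V → Option ℝ} {K : Set V} {c x : ℝ} {v w a : V}

lemma PlateauConn.symm (h : T.PlateauConn f x v a) : T.PlateauConn f x a v :=
  Relation.ReflTransGen.mono (fun _ _ hab => ⟨T.adj_symm _ _ hab.1, hab.2.2, hab.2.1⟩) _ _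
    (Relation.reflTransGen_swap.mpr h)

lemma PlateauConn.eq_some (h : T.PlateauConn f x v a) (hv : f v = some x) : f a = some x := by
  induction h with
  | refl => exact hv
  | tail _ hst _ => exact hst.2.2

lemma PlateauConn.mono (hfg : ∀ u, f u = some x → g u = some x) (h : T.PlateauConn f x v a) :
    T.PlateauConn g x v a :=
  Relation.ReflTransGen.mono (fun _ _ hab => ⟨hab.1, hfg _ hab.2.1, hfg _ hab.2.2⟩) _ _ h

lemma Drains.mono (hfg : ∀ u y, f u = some y → g u = some y) (h : T.Drains f x v) :
    T.Drains g x v := by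
  obtain ⟨a, t, y, hva, hat, ht, hy⟩ := h
  exact ⟨a, t, y, hva.mono fun u => hfg u x, hat, hfg t y ht, hy⟩

lemma DrainsOrGuarded.append {p : List (V × Bool)} (h : T.DrainsOrGuarded p f)
    (l : List (V × Bool)) : T.DrainsOrGuarded (p ++ l) f := fun v x hv =>
  (h v x hv).imp_right fun ⟨w, hw, hg⟩ => ⟨w, List.mem_append_left l hw, hg⟩

lemma PlateauConn.of_piecewise (hsep : ∀ a b, f a = some x → T.adj a b → b ∈ K → c ≠ x)
    (hv : f v = some x) (h : T.PlateauConn (K.piecewise (fun _ => some c) f) x v a) :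
    T.PlateauConn f x v a := by
  induction h with
  | refl => exact .refl
  | @tail b d _ hbd ih =>
    have hb := ih.eq_some hv
    rcases Set.piecewise_some_eq_some_iff.1 hbd.2.2 with ⟨hdK, hcx⟩ | ⟨-, hd⟩
    · exact absurd hcx (hsep b d hb hbd.1 hdK)
    · exact ih.tail ⟨hbd.1, hb, hd⟩

lemma PlateauConn.mem_of_piecewise (hiso : ∀ a ∈ K, ∀ b, T.adj a b → f b = none)
    (hv : v ∈ K) (h : T.PlateauConn (K.piecewise (fun _ => some c) f) c v a) : a ∈ K := by
  induction h with
  | refl => exact hv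
  | @tail b d _ hbd ih =>
    rcases Set.piecewise_some_eq_some_iff.1 hbd.2.2 with ⟨hdK, -⟩ | ⟨-, hd⟩
    · exact hdK
    · simp [hiso b ih d hbd.1] at hd

lemma GuardedBy.piecewise (hKnone : ∀ u ∈ K, f u = none) (hv : f v = some x)
    (hsep : ∀ a b, f a = some x → T.adj a b → b ∈ K → c ≠ x)
    (hK : ∀ a t, T.PlateauConn f x v a → T.adj a t → t ∈ K → T.high w < T.low t)
    (h : T.GuardedBy f x v w) : T.GuardedBy (K.piecewise (fun _ => some c) f) x v w := by
  obtain ⟨hvw, hxw, hup⟩ := h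
  refine ⟨hvw.mono fun u => Set.piecewise_some_eq_some_of_eq_some hKnone, hxw,
    fun a t y hva hat ht hxy => ?_⟩
  have hva' := hva.of_piecewise hsep hv
  rcases Set.piecewise_some_eq_some_iff.1 ht with ⟨htK, -⟩ | ⟨-, ht⟩
  · exact hK a t hva' hat htK
  · exact hup a t y hva' hat ht hxy

end Plateau

section PendComp

variable {st : SweepState V} {v u t : V}

lemma self_mem_pendComp : v ∈ T.pendComp st v := Relation.ReflTransGen.refl

lemma pendingS_of_mem_pendComp (hv : pendingS st v) (hu : u ∈ T.pendComp st v) :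
    pendingS st u := by
  induction hu with
  | refl => exact hv
  | tail _ hst _ => exact hst.2.2

lemma mem_pendComp_of_adj (hv : pendingS st v) (hu : u ∈ T.pendComp st v) (hut : T.adj u t)
    (ht : pendingS st t) : t ∈ T.pendComp st v :=
  Relation.ReflTransGen.tail hu ⟨hut, pendingS_of_mem_pendComp hv hu, ht⟩

lemma plateauConn_of_mem_pendComp {f : V → Option ℝ} {x : ℝ}
    (hf : ∀ w ∈ T.pendComp st v, f w = some x) (hu : u ∈ T.pendComp st v) :
    T.PlateauConn f x u v := by
  refine PlateauConn.symm ?_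
  induction hu with
  | refl => exact .refl
  | @tail b d hb hbd ih => exact ih.tail ⟨hbd.1, hf b hb, hf d (hb.tail hbd)⟩

end PendComp

namespace ValidEventList

variable {evs p r : List (V × Bool)}

lemma key_le (hevs : T.ValidEventList evs) (hs : evs = p ++ r) {e₁ e₂ : V × Bool}
    (h₁ : e₁ ∈ p) (h₂ : e₂ ∈ r) : T.eKey e₁ ≤ T.eKey e₂ := by
  obtain ⟨-, -, hpw⟩ := hevs
  rcases (List.pairwise_append.1 (hs ▸ hpw)).2.2 e₁ h₁ e₂ h₂ with h | h
  exacts [h.le, h.1.le]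

lemma high_lt_low (hevs : T.ValidEventList evs) (hs : evs = p ++ r) {w u : V}
    (h₁ : (w, true) ∈ p) (h₂ : (u, false) ∈ r) : T.high w < T.low u := by
  obtain ⟨-, -, hpw⟩ := hevs
  rcases (List.pairwise_append.1 (hs ▸ hpw)).2.2 _ h₁ _ h₂ with h | h
  exacts [h, (h.2 ⟨rfl, rfl⟩).elim]

lemma mem_or_mem (hevs : T.ValidEventList evs) (hs : evs = p ++ r) (e : V × Bool) :
    e ∈ p ∨ e ∈ r :=
  List.mem_append.1 (hs ▸ hevs.1 e.1 e.2)

lemma notMem_of_eq_cons (hevs : T.ValidEventList evs) {e : V × Bool} (hs : evs = p ++ e :: r) :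
    e ∉ p := fun he =>
  (List.nodup_append.1 (hs ▸ hevs.2.1)).2.2 e he e List.mem_cons_self rfl

lemma low_mem_of_high (hevs : T.ValidEventList evs) {v : V} (hle : T.low v ≤ T.high v)
    (hs : evs = p ++ (v, true) :: r) : (v, false) ∈ p := by
  rcases hevs.mem_or_mem hs (v, false) with h | h
  · exact h
  · have h' : (v, false) ∈ r := by simpa using h
    exact absurd (hevs.high_lt_low (p := p ++ [(v, true)]) (by simp [hs]) (by simp) h') hle.not_gt

end ValidEventList

/-- `p` are the events processed so far, `r` those still to come. -/
structure SweepInv (T : ImpTerrain V) (p r : List (V × Bool)) (st : SweepState V) : Prop where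
  mem_discovered : ∀ v, v ∈ st.discovered ↔ (v, false) ∈ p
  discovered_of_ne_none : ∀ v, st.final v ≠ none → v ∈ st.discovered
  ne_none_of_high : ∀ v, (v, true) ∈ p → st.final v ≠ none
  mem_Icc : ∀ v x, st.final v = some x → T.low v ≤ x ∧ x ≤ T.high v
  le_key : ∀ v x, st.final v = some x → ∀ e ∈ r, x ≤ T.eKey e
  not_discovered : ∀ u t, st.final u ≠ none → T.adj u t → st.final t = none → t ∉ st.discovered
  drainsOrGuarded : T.DrainsOrGuarded p st.final

namespace SweepInv

variable {evs p r : List (V × Bool)} {st : SweepState V} {v : V}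

lemma of_piecewise {e : V × Bool} {st' : SweepState V} (h : T.SweepInv p (e :: r) st)
    {K : Set V} {c : ℝ} (hD : ∀ u, u ∈ st'.discovered ↔ (u, false) ∈ p ++ [e])
    (hf : st'.final = K.piecewise (fun _ => some c) st.final)
    (hKD : K ⊆ st'.discovered)
    (hhigh : ∀ u, e = (u, true) → u ∈ K ∨ st.final u ≠ none)
    (hc : ∀ u ∈ K, T.low u ≤ c ∧ c ≤ T.high u) (hcr : ∀ u ∈ K, ∀ e' ∈ r, c ≤ T.eKey e')
    (hclosed : ∀ u ∈ K, ∀ t, T.adj u t → t ∈ st'.discovered → st.final t = none → t ∈ K)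
    (hnew : ∀ u t, st.final u ≠ none → T.adj u t → t ∈ st'.discovered → t ∉ st.discovered →
      t ∈ K)
    (hstar : T.DrainsOrGuarded (p ++ [e]) st'.final) : T.SweepInv (p ++ [e]) r st' := by
  have hdisc : ∀ u, u ∈ st.discovered → u ∈ st'.discovered := fun u hu =>
    (hD u).2 (List.mem_append_left _ ((h.mem_discovered u).1 hu))
  refine ⟨hD, fun u hu => ?_, fun u hu => ?_, fun u x hu => ?_, fun u x hu e' he' => ?_,
    fun u t hu hut ht => ?_, hstar⟩ <;> rw [hf] at *
  · rcases Set.piecewise_some_ne_none_iff.1 hu with huK | hu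
    exacts [hKD huK, hdisc u (h.discovered_of_ne_none u hu)]
  · refine Set.piecewise_some_ne_none_iff.2 ?_
    rcases List.mem_append.1 hu with hu | hu
    · exact .inr (h.ne_none_of_high u hu)
    · exact hhigh u (List.mem_singleton.1 hu).symm
  · rcases Set.piecewise_some_eq_some_iff.1 hu with ⟨huK, rfl⟩ | ⟨-, hu⟩
    exacts [hc u huK, h.mem_Icc u x hu]
  · rcases Set.piecewise_some_eq_some_iff.1 hu with ⟨huK, rfl⟩ | ⟨-, hu⟩
    exacts [hcr u huK e' he', h.le_key u x hu e' (List.mem_cons_of_mem _ he')]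
  · obtain ⟨htK, ht⟩ := Set.piecewise_some_eq_none_iff.1 ht
    intro htD
    rcases Set.piecewise_some_ne_none_iff.1 hu with huK | hu
    · exact htK (hclosed u huK t hut htD ht)
    · by_cases htD' : t ∈ st.discovered
      · exact h.not_discovered u t hu hut ht htD'
      · exact htK (hnew u t hu hut htD htD')

lemma drainsOrGuarded_low_of_adj (hevs : T.ValidEventList evs)
    (hs : evs = p ++ (v, false) :: r) (h : T.SweepInv p ((v, false) :: r) st)
    (hpend : pendingS ⟨insert v st.discovered, st.final, st.proxies⟩ v)
    {u₀ : V} (hvu₀ : T.adj v u₀) (hu₀ : st.final u₀ ≠ none) :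
    T.DrainsOrGuarded (p ++ [(v, false)])
      ((T.pendComp ⟨insert v st.discovered, st.final, st.proxies⟩ v).piecewise
        (fun _ => some (T.low v)) st.final) := by
  set K := T.pendComp ⟨insert v st.discovered, st.final, st.proxies⟩ v
  set g := K.piecewise (fun _ => some (T.low v)) st.final
  have hKnone : ∀ u ∈ K, st.final u = none := fun u hu => (pendingS_of_mem_pendComp hpend hu).2
  have hext : ∀ u y, st.final u = some y → g u = some y := fun u y =>
    Set.piecewise_some_eq_some_of_eq_some hKnone
  have hguard_lt : ∀ w, (w, true) ∈ p → T.high w < T.low v := fun w hw =>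
    hevs.high_lt_low hs hw List.mem_cons_self
  intro v₀ x hv₀
  rcases Set.piecewise_some_eq_some_iff.1 hv₀ with ⟨hv₀K, rfl⟩ | ⟨-, hfv₀⟩
  · have hv₀v : T.PlateauConn g (T.low v) v₀ v :=
      plateauConn_of_mem_pendComp (fun w hw => Set.piecewise_eq_of_mem _ _ _ hw) hv₀K
    obtain ⟨y, hy⟩ := Option.ne_none_iff_exists'.1 hu₀
    rcases (h.le_key u₀ y hy _ List.mem_cons_self).lt_or_eq with hlt | rfl
    · exact .inl ⟨v, u₀, y, hv₀v, hvu₀, hext _ _ hy, hlt⟩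
    · rcases h.drainsOrGuarded u₀ _ hy with ⟨a, t, y', hu₀a, hat, ht, hy'⟩ | ⟨w, hw, hwg⟩
      · have hvu₀' : T.PlateauConn g (T.low v) v u₀ := Relation.ReflTransGen.single
          ⟨hvu₀, Set.piecewise_eq_of_mem _ _ _ self_mem_pendComp, hext _ _ hy⟩
        exact .inl ⟨a, t, y', hv₀v.trans (hvu₀'.trans (hu₀a.mono (hext · _))), hat,
          hext _ _ ht, hy'⟩
      -- the proxy's high event preceded this low event, so the proxy lies below `low v`
      · exact absurd hwg.2.1 (hguard_lt w hw).not_ge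
  · rcases h.drainsOrGuarded v₀ x hfv₀ with hdr | ⟨w, hw, hwg⟩
    · exact .inl (hdr.mono hext)
    · have hxv : x < T.low v := hwg.2.1.trans_lt (hguard_lt w hw)
      refine .inr ⟨w, List.mem_append_left _ hw,
        hwg.piecewise hKnone hfv₀ (fun _ _ _ _ _ => hxv.ne') fun a t hv₀a hat htK => ?_⟩
      have htv : t = v := by
        refine (Set.mem_insert_iff.1 (pendingS_of_mem_pendComp hpend htK).1).resolve_right ?_
        exact h.not_discovered a t (by simp [hv₀a.eq_some hfv₀]) hat (hKnone t htK)
      exact htv ▸ hguard_lt w hw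

lemma drainsOrGuarded_high_of_pending (h : T.SweepInv p ((v, true) :: r) st)
    (hpend : pendingS st v) {c : ℝ} (hc : c ≤ T.high v) :
    T.DrainsOrGuarded (p ++ [(v, true)])
      ((T.pendComp st v).piecewise (fun _ => some c) st.final) := by
  set K := T.pendComp st v
  have hKnone : ∀ u ∈ K, st.final u = none := fun u hu => (pendingS_of_mem_pendComp hpend hu).2
  have hiso : ∀ a ∈ K, ∀ b, T.adj a b → st.final b = none := fun a ha b hab => by
    by_contra hb
    exact h.not_discovered b a hb (T.adj_symm _ _ hab) (hKnone a ha)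
      (pendingS_of_mem_pendComp hpend ha).1
  intro v₀ x hv₀
  rcases Set.piecewise_some_eq_some_iff.1 hv₀ with ⟨hv₀K, rfl⟩ | ⟨-, hfv₀⟩
  · refine .inr ⟨v, List.mem_append_right _ (List.mem_singleton_self _),
      plateauConn_of_mem_pendComp (fun w hw => Set.piecewise_eq_of_mem _ _ _ hw) hv₀K, hc,
      fun a t y hv₀a hat ht hxy => ?_⟩
    have haK := hv₀a.mem_of_piecewise hiso hv₀K
    rcases Set.piecewise_some_eq_some_iff.1 ht with ⟨-, rfl⟩ | ⟨-, ht⟩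
    · exact absurd hxy (lt_irrefl _)
    · simp [hiso a haK t hat] at ht
  · have hsep : ∀ a b, st.final a = some x → T.adj a b → b ∉ K := fun a b ha hab hb => by
      simp [hiso b hb a (T.adj_symm _ _ hab)] at ha
    rcases h.drainsOrGuarded v₀ x hfv₀ with hdr | ⟨w, hw, hwg⟩
    · exact .inl (hdr.mono fun u y => Set.piecewise_some_eq_some_of_eq_some hKnone)
    · exact .inr ⟨w, List.mem_append_left _ hw, hwg.piecewise hKnone hfv₀
        (fun a b ha hab hb => (hsep a b ha hab hb).elim)
        (fun a t hv₀a hat ht => (hsep a t (hv₀a.eq_some hfv₀) hat ht).elim)⟩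

lemma sweepStep_low (hevs : T.ValidEventList evs) (hs : evs = p ++ (v, false) :: r)
    (h : T.SweepInv p ((v, false) :: r) st) :
    T.SweepInv (p ++ [(v, false)]) r (T.sweepStep st (v, false)) := by
  have hvD : v ∉ st.discovered := fun hD => hevs.notMem_of_eq_cons hs ((h.mem_discovered v).1 hD)
  have hfv : st.final v = none := by_contra fun hfv => hvD (h.discovered_of_ne_none v hfv)
  have hD : ∀ u, u ∈ insert v st.discovered ↔ (u, false) ∈ p ++ [(v, false)] := fun u => by
    simp [h.mem_discovered, or_comm]
  by_cases hC : ∃ u, T.adj v u ∧ (st.final u).isSome = true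
  · obtain ⟨u₀, hvu₀, hu₀⟩ := id hC
    simp only [sweepStep, if_pos hC]
    set st₁ : SweepState V := ⟨insert v st.discovered, st.final, st.proxies⟩
    have hpend : pendingS st₁ v := ⟨mem_insert _ _, hfv⟩
    have hKdisc : ∀ u ∈ T.pendComp st₁ v, u = v ∨ u ∈ st.discovered := fun u hu =>
      (pendingS_of_mem_pendComp hpend hu).1
    have hs' : evs = (p ++ [(v, false)]) ++ r := by simp [hs]
    refine h.of_piecewise hD rfl (fun u hu => (pendingS_of_mem_pendComp hpend hu).1) (by simp)
      (fun u hu => ⟨?_, ?_⟩) (fun u _ e' he' => hevs.key_le (e₁ := (v, false)) hs' (by simp) he')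
      (fun u hu t hut htD ht => mem_pendComp_of_adj hpend hu hut ⟨htD, ht⟩)
      (fun u t _ _ htD htD' => ?_) (h.drainsOrGuarded_low_of_adj hevs hs hpend hvu₀ ?_)
    · rcases hKdisc u hu with rfl | huD
      · exact le_rfl
      · exact hevs.key_le hs ((h.mem_discovered u).1 huD) List.mem_cons_self
    · have hu : (u, true) ∈ r := by
        have := (hevs.mem_or_mem hs (u, true)).resolve_left fun hu' =>
          h.ne_none_of_high u hu' (pendingS_of_mem_pendComp hpend hu).2
        simpa using this
      exact hevs.key_le (e₁ := (v, false)) hs' (by simp) hu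
    · rw [(Set.mem_insert_iff.1 htD).resolve_right htD']
      exact self_mem_pendComp
    · simpa [Option.isSome_iff_ne_none] using hu₀
  · simp only [sweepStep, if_neg hC]
    refine h.of_piecewise (K := ∅) (c := 0) hD (by convert (Set.piecewise_empty _ _).symm)
      (empty_subset _) (by simp) (by simp) (by simp) (by simp) (fun u t hu hut htD htD' => ?_)
      (h.drainsOrGuarded.append _)
    rw [(Set.mem_insert_iff.1 htD).resolve_right htD'] at hut
    exact absurd ⟨u, T.adj_symm _ _ hut, Option.isSome_iff_ne_none.2 hu⟩ hC

lemma sweepStep_high (hle : T.low v ≤ T.high v) (hevs : T.ValidEventList evs)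
    (hs : evs = p ++ (v, true) :: r) (h : T.SweepInv p ((v, true) :: r) st) :
    T.SweepInv (p ++ [(v, true)]) r (T.sweepStep st (v, true)) := by
  have hD : ∀ u, u ∈ st.discovered ↔ (u, false) ∈ p ++ [(v, true)] := by
    simp [h.mem_discovered]
  by_cases hfv : (st.final v).isSome = true
  · simp only [sweepStep, if_pos hfv]
    refine h.of_piecewise (K := ∅) (c := 0) hD (by convert (Set.piecewise_empty _ _).symm)
      (empty_subset _) ?_ (by simp) (by simp) (by simp) (fun _ _ _ _ htD htD' => absurd htD htD')
      (h.drainsOrGuarded.append _)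
    rintro u ⟨⟩
    exact .inr (Option.isSome_iff_ne_none.1 hfv)
  · simp only [sweepStep, if_neg hfv]
    have hpend : pendingS st v :=
      ⟨(h.mem_discovered v).2 (hevs.low_mem_of_high hle hs), by simpa using hfv⟩
    set K := T.pendComp st v
    have hlow_le : ∀ e ∈ (v, true) :: r, ∀ s ∈ K, T.low s ≤ T.eKey e := fun e he s hs' =>
      hevs.key_le (e₁ := (s, false)) hs
        ((h.mem_discovered s).1 (pendingS_of_mem_pendComp hpend hs').1) he
    have hKne : (T.low '' K).Nonempty := ⟨_, mem_image_of_mem _ self_mem_pendComp⟩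
    have hsup_le : ∀ e ∈ (v, true) :: r, sSup (T.low '' K) ≤ T.eKey e := fun e he =>
      csSup_le hKne (forall_mem_image.2 (hlow_le e he))
    have hhigh : ∀ u ∈ K, sSup (T.low '' K) ≤ T.high u := fun u hu =>
      hsup_le (u, true) ((hevs.mem_or_mem hs _).resolve_left fun hu' =>
        h.ne_none_of_high u hu' (pendingS_of_mem_pendComp hpend hu).2)
    refine h.of_piecewise (K := K) (c := sSup (T.low '' K)) hD rfl
      (fun u hu => (pendingS_of_mem_pendComp hpend hu).1)
      (fun u hu => .inl ((Prod.mk.inj hu).1 ▸ self_mem_pendComp))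
      (fun u hu => ⟨le_csSup (K.toFinite.image _).bddAbove (mem_image_of_mem _ hu), hhigh u hu⟩)
      (fun _ _ e he => hsup_le e (List.mem_cons_of_mem _ he))
      (fun u hu t hut htD ht => mem_pendComp_of_adj hpend hu hut ⟨htD, ht⟩)
      (fun _ _ _ _ htD htD' => absurd htD htD')
      (h.drainsOrGuarded_high_of_pending hpend (hhigh v self_mem_pendComp))

lemma sweepStep (hle : ∀ v, T.low v ≤ T.high v) (hevs : T.ValidEventList evs) {e : V × Bool}
    (hs : evs = p ++ e :: r) (h : T.SweepInv p (e :: r) st) :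
    T.SweepInv (p ++ [e]) r (T.sweepStep st e) := by
  obtain ⟨v, _ | _⟩ := e
  exacts [h.sweepStep_low hevs hs, h.sweepStep_high (hle v) hevs hs]

lemma foldl_sweepStep (hle : ∀ v, T.low v ≤ T.high v) (hevs : T.ValidEventList evs) :
    ∀ {r p : List (V × Bool)} {st : SweepState V}, evs = p ++ r → T.SweepInv p r st →
      T.SweepInv evs [] (r.foldl T.sweepStep st)
  | [], p, st, hs, h => by simpa [hs] using h
  | e :: r, p, st, hs, h =>
    foldl_sweepStep hle hevs (r := r) (p := p ++ [e]) (by simp [hs]) (h.sweepStep hle hevs hs)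

end SweepInv

variable {evs : List (V × Bool)}

lemma sweepInv_sweepRun (hle : ∀ v, T.low v ≤ T.high v) (hevs : T.ValidEventList evs) :
    T.SweepInv evs [] (T.sweepRun evs) :=
  SweepInv.foldl_sweepStep hle hevs (p := []) rfl
    ⟨by simp, by simp, by simp, by simp, by simp, by simp, by simp [DrainsOrGuarded]⟩

lemma sweepRun_final (hle : ∀ v, T.low v ≤ T.high v) (hevs : T.ValidEventList evs) :
    (T.sweepRun evs).final = fun u => some (T.sweepM evs u) := by
  funext u
  obtain ⟨y, hy⟩ := Option.ne_none_iff_exists'.1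
    ((sweepInv_sweepRun hle hevs).ne_none_of_high u (hevs.1 u true))
  simp [sweepM, hy]

lemma low_le_sweepM (hle : ∀ v, T.low v ≤ T.high v) (hevs : T.ValidEventList evs) (u : V) :
    T.low u ≤ T.sweepM evs u :=
  ((sweepInv_sweepRun hle hevs).mem_Icc u _ (congrFun (sweepRun_final hle hevs) u)).1

lemma sweepM_le_high (hle : ∀ v, T.low v ≤ T.high v) (hevs : T.ValidEventList evs) (u : V) :
    T.sweepM evs u ≤ T.high u :=
  ((sweepInv_sweepRun hle hevs).mem_Icc u _ (congrFun (sweepRun_final hle hevs) u)).2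

lemma LocalMin.plateauConn_iff {R : V → ℝ} {P : Set V} (hP : T.LocalMin R P) {v a : V}
    (hv : v ∈ P) : T.PlateauConn (fun u => some (R u)) (R v) v a ↔ a ∈ P := by
  refine ⟨fun h => ?_, fun ha => ?_⟩
  · induction h with
    | refl => exact hv
    | @tail b d _ hbd ih =>
      by_contra hd
      have hlt := hP.2.2.2 b ih d ⟨hd, b, ih, T.adj_symm _ _ hbd.1⟩
      simp only [Option.some.injEq] at hbd
      exact hlt.ne (hbd.2.1.trans hbd.2.2.symm)
  · refine Relation.ReflTransGen.mono (fun b d hbd => ?_) _ _ (hP.2.1 v hv a ha)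
    exact ⟨hbd.1, congrArg some (hP.2.2.1 b hbd.2.1 v hv), congrArg some (hP.2.2.1 d hbd.2.2 v hv)⟩

lemma exists_high_lt_low_nbhd_of_localMin (hle : ∀ v, T.low v ≤ T.high v)
    (hevs : T.ValidEventList evs) {P : Set V}
    (hP : T.LocalMin (T.sweepM evs) P) : ∃ w ∈ P, ∀ t ∈ T.Nbhd P, T.high w < T.low t := by
  obtain ⟨v, hvP⟩ := hP.1
  have hstar := (sweepInv_sweepRun hle hevs).drainsOrGuarded v (T.sweepM evs v)
    (congrFun (sweepRun_final hle hevs) v)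
  rw [sweepRun_final hle hevs] at hstar
  rcases hstar with ⟨a, t, y, hva, hat, hty, hy⟩ | ⟨w, -, hvw, -, hguard⟩
  · obtain rfl : T.sweepM evs t = y := Option.some.inj hty
    have haP := (hP.plateauConn_iff hvP).1 hva
    have htP : t ∉ P := fun htP => hy.ne (hP.2.2.1 t htP v hvP)
    have hlt := hP.2.2.2 a haP t ⟨htP, a, haP, T.adj_symm _ _ hat⟩
    exact absurd (hP.2.2.1 a haP v hvP ▸ hlt) hy.not_gt
  · refine ⟨w, (hP.plateauConn_iff hvP).1 hvw, fun t ⟨htP, a, haP, hta⟩ => ?_⟩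
    have hlt := hP.2.2.2 a haP t ⟨htP, a, haP, hta⟩
    exact hguard a t _ ((hP.plateauConn_iff hvP).2 haP) (T.adj_symm _ _ hta) rfl
      (hP.2.2.1 a haP v hvP ▸ hlt)

end ImpTerrain

/-- Raising the lower bounds of an imprecise terrain to the realization `M`
computed by the sweep-plane minimum-removal algorithm yields a regular
imprecise terrain. -/
theorem stmt17 {V : Type} [Fintype V] [DecidableEq V] (T : ImpTerrain V)
    (hle : ∀ v, T.low v ≤ T.high v)
    (evs : List (V × Bool)) (hevs : T.ValidEventList evs) :
    ({ T with low := T.sweepM evs } : ImpTerrain V).Regular := by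
  intro P hP
  obtain ⟨w, hwP, hguard⟩ := ImpTerrain.exists_high_lt_low_nbhd_of_localMin hle hevs hP
  exact ImpTerrain.impreciseMin_of_high_lt_low_nbhd (T := { T with low := T.sweepM evs })
    (ImpTerrain.sweepM_le_high hle hevs) hP hwP
    fun t ht => (hguard t ht).trans_le (ImpTerrain.low_le_sweepM hle hevs t)
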